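/- Let (X,d) be a Gromov hyperbolic metric space with basepoint o and let ξ ∈ ∂X be a fixed point of an isometry g of X. Then for all y₁,y₂ in ∂X ∖ {ξ} (or X), the metametric D_{ξ,o} based at ξ satisfies D_{ξ,o}(g(y₁), g(y₂)) ≍ g'(ξ)^{-1} · D_{ξ,o}(y₁, y₂), where g'(ξ) = b^{β_ξ(o, g^{-1}(o))} and the implied constant is independent of g, y₁, y₂. -/

import Mathlib

open Filter

/-- The Gromov product `⟨p|q⟩_b = (1/2)(d(p,b) + d(q,b) - d(p,q))`. -/
noncomputable def gp {X : Type*} [MetricSpace X] (b p q : X) : ℝ :=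
  (dist p b + dist q b - dist p q) / 2

/-- A Gromov sequence (with respect to the basepoint `o`): `⟨u_n|u_m⟩_o → ∞`. -/
def IsGromovSeq {X : Type*} [MetricSpace X] (o : X) (u : ℕ → X) : Prop :=
  Tendsto (fun p : ℕ × ℕ => gp o (u p.1) (u p.2)) atTop atTop

/-- Two Gromov sequences are equivalent (represent the same boundary point) when
`⟨u_n|v_n⟩_o → ∞`. -/
def SeqEquiv {X : Type*} [MetricSpace X] (o : X) (u v : ℕ → X) : Prop :=
  Tendsto (fun n => gp o (u n) (v n)) atTop atTop

/-- The extended Gromov product `⟨p|ξ⟩_b` of a point `p` with the boundary point `ξ`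
represented by the Gromov sequence `u`. -/
noncomputable def gpB {X : Type*} [MetricSpace X] (o b p : X) (u : ℕ → X) : ℝ :=
  sInf {L : ℝ | ∃ v : ℕ → X, IsGromovSeq o v ∧ SeqEquiv o u v ∧
    L = Filter.liminf (fun n => gp b p (v n)) Filter.atTop}

/-- The derivative `g'(ξ) = b^{β_ξ(o, g⁻¹(o))}` of an isometry `g` at the boundary point
`ξ` represented by `u`, where `β_ξ(y,z) = ⟨z|ξ⟩_y - ⟨y|ξ⟩_z`. -/
noncomputable def derivAt {X : Type*} [MetricSpace X] (o : X) (b : ℝ) (u : ℕ → X)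
    (g : X ≃ᵢ X) : ℝ :=
  b ^ (gpB o o (g.symm o) u - gpB o (g.symm o) o u)

/-!
Put `z = g⁻¹ o`. Since `g` is an isometry fixing `ξ`, the exponent of `D_{ξ,o}(g y₁, g y₂)`
is, up to `2δ`, `⟨y₁|y₂⟩_z - ⟨y₁|ξ⟩_z - ⟨y₂|ξ⟩_z`. For a point `w` in place of `ξ`, moving the
basepoint from `o` to `z` shifts `⟨y₁|y₂⟩ - ⟨y₁|w⟩ - ⟨y₂|w⟩` exactly by a Busemann term. Take
`w = u_n`: by hyperbolicity each `⟨p|u_n⟩_b` eventually lies within `δ` of its liminf, and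
`⟨p|ξ⟩_b` lies within `δ` of that liminf, so the identity passes to `ξ` with an error of at
most `6δ`.
-/

lemma rpow_comparable_of_abs_exponent_sub_le {b K c β e e' D D' : ℝ} (hb : 1 < b) (hK : 0 < K)
    (hD : K⁻¹ * b ^ (-e) ≤ D ∧ D ≤ K * b ^ (-e))
    (hD' : K⁻¹ * b ^ (-e') ≤ D' ∧ D' ≤ K * b ^ (-e'))
    (he : |e' - (e + β)| ≤ c) :
    (K ^ 2 * b ^ c)⁻¹ * (b ^ β)⁻¹ * D ≤ D' ∧ D' ≤ K ^ 2 * b ^ c * (b ^ β)⁻¹ * D := by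
  have hb0 : 0 < b := zero_lt_one.trans hb
  rw [abs_le] at he
  constructor
  · calc (K ^ 2 * b ^ c)⁻¹ * (b ^ β)⁻¹ * D
        ≤ (K ^ 2 * b ^ c)⁻¹ * (b ^ β)⁻¹ * (K * b ^ (-e)) := by gcongr; exact hD.2
      _ = K⁻¹ * b ^ (-(e + β) - c) := by
          rw [sub_eq_add_neg, neg_add, Real.rpow_add hb0, Real.rpow_add hb0,
            Real.rpow_neg hb0.le β, Real.rpow_neg hb0.le c]
          field_simp
      _ ≤ K⁻¹ * b ^ (-e') := by gcongr; exacts [hb.le, by linarith]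
      _ ≤ D' := hD'.1
  · calc D' ≤ K * b ^ (-e') := hD'.2
      _ ≤ K * b ^ (-(e + β) + c) := by gcongr; exacts [hb.le, by linarith]
      _ = K ^ 2 * b ^ c * (b ^ β)⁻¹ * (K⁻¹ * b ^ (-e)) := by
          rw [neg_add, Real.rpow_add hb0, Real.rpow_add hb0, Real.rpow_neg hb0.le β]
          field_simp
      _ ≤ K ^ 2 * b ^ c * (b ^ β)⁻¹ * D := by gcongr; exact hD.1

def IsGromovHyperbolic (δ : ℝ) (X : Type*) [MetricSpace X] : Prop :=
  ∀ x y z w : X, min (gp w x y) (gp w y z) - δ ≤ gp w x z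

noncomputable def seqGp {X : Type*} [MetricSpace X] (b p : X) (v : ℕ → X) : ℝ :=
  liminf (fun n => gp b p (v n)) atTop

/-- The exponent `⟨y₁|y₂⟩_o - ⟨y₁|ξ⟩_o - ⟨y₂|ξ⟩_o` of the metametric `D_{ξ,o}`. -/
noncomputable def horoGp {X : Type*} [MetricSpace X] (o : X) (u : ℕ → X) (y₁ y₂ : X) : ℝ :=
  gp o y₁ y₂ - gpB o o y₁ u - gpB o o y₂ u

noncomputable def busemann {X : Type*} [MetricSpace X] (o : X) (u : ℕ → X) (y z : X) : ℝ :=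
  gpB o y z u - gpB o z y u

section GromovProduct

variable {X : Type*} [MetricSpace X]

lemma gp_nonneg (b p q : X) : 0 ≤ gp b p q := by
  have := dist_triangle p b q
  rw [dist_comm b q] at this
  unfold gp; linarith

lemma gp_le_dist (b p q : X) : gp b p q ≤ dist p b := by
  have := dist_triangle q p b
  rw [dist_comm q p] at this
  unfold gp; linarith

lemma gp_comm (b p q : X) : gp b p q = gp b q p := by
  unfold gp; rw [dist_comm p q]; ring

lemma gp_sub_dist_le (o b p q : X) : gp o p q - dist o b ≤ gp b p q := by
  have := dist_triangle p b o
  have := dist_triangle q b o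
  rw [dist_comm b o] at *
  unfold gp; linarith

lemma gp_isometryEquiv_apply (g : X ≃ᵢ X) (o p q : X) :
    gp o (g p) (g q) = gp (g.symm o) p q := by
  conv_lhs => rw [← g.apply_symm_apply o]
  simp only [gp, g.dist_eq]

/-- The shift `gp z o w - gp o z w = d(w,z) - d(w,o)` is the Busemann function at `w`. -/
lemma gp_sub_gp_sub_gp_change_base (o z y₁ y₂ w : X) :
    gp z y₁ y₂ - gp z y₁ w - gp z y₂ w =
      gp o y₁ y₂ - gp o y₁ w - gp o y₂ w - (gp z o w - gp o z w) := by
  unfold gp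
  simp only [dist_comm]
  ring

lemma isBoundedUnder_ge_gp (b p : X) (v : ℕ → X) :
    IsBoundedUnder (· ≥ ·) atTop (fun n => gp b p (v n)) :=
  isBoundedUnder_of ⟨0, fun n => gp_nonneg b p (v n)⟩

lemma isBoundedUnder_le_gp (b p : X) (v : ℕ → X) :
    IsBoundedUnder (· ≤ ·) atTop (fun n => gp b p (v n)) :=
  isBoundedUnder_of ⟨dist p b, fun n => gp_le_dist b p (v n)⟩

lemma tendsto_gp_atTop_change_base {ι : Type*} {l : Filter ι} {p q : ι → X} (o b : X)
    (h : Tendsto (fun i => gp o (p i) (q i)) l atTop) :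
    Tendsto (fun i => gp b (p i) (q i)) l atTop :=
  tendsto_atTop_mono (fun i => by linarith [gp_sub_dist_le o b (p i) (q i)])
    (tendsto_atTop_add_const_right l (-dist o b) h)

end GromovProduct

section GromovSequence

variable {X : Type*} [MetricSpace X] {o : X} {u v : ℕ → X}

lemma IsGromovSeq.seqEquiv_self (hu : IsGromovSeq o u) : SeqEquiv o u u :=
  hu.comp tendsto_atTop_diagonal

lemma SeqEquiv.symm (h : SeqEquiv o u v) : SeqEquiv o v u := by
  simpa only [SeqEquiv, gp_comm o (v _)] using h

lemma IsGromovSeq.map_isometryEquiv (hu : IsGromovSeq o u) (g : X ≃ᵢ X) :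
    IsGromovSeq o (fun n => g (u n)) := by
  simpa only [IsGromovSeq, gp_isometryEquiv_apply] using
    tendsto_gp_atTop_change_base o (g.symm o) hu

end GromovSequence

section Hyperbolic

variable {X : Type*} [MetricSpace X] {δ : ℝ} {o : X} {u v w : ℕ → X}

lemma IsGromovHyperbolic.tendsto_gp_of_seqEquiv (hX : IsGromovHyperbolic δ X)
    (hv : SeqEquiv o u v) (hw : SeqEquiv o u w) (b : X) :
    Tendsto (fun n => gp b (v n) (w n)) atTop atTop := by
  refine tendsto_gp_atTop_change_base o b (tendsto_atTop.mpr fun c => ?_)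
  filter_upwards [tendsto_atTop.mp hv.symm (c + δ), tendsto_atTop.mp hw (c + δ)]
    with n hvu huw
  linarith [hX (v n) (u n) (w n) o, le_min hvu huw]

lemma IsGromovHyperbolic.seqGp_le_seqGp_add (hX : IsGromovHyperbolic δ X)
    (hv : SeqEquiv o u v) (hw : SeqEquiv o u w) (b p : X) :
    seqGp b p w ≤ seqGp b p v + δ := by
  have hclose : ∀ᶠ n in atTop, gp b p (w n) ≤ gp b p (v n) + δ := by
    filter_upwards [tendsto_atTop.mp (hX.tendsto_gp_of_seqEquiv hw hv b) (dist p b)]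
      with n hwv
    have hmin := min_eq_left ((gp_le_dist b p (w n)).trans hwv)
    linarith [hX p (w n) (v n) b]
  have hbdd : IsBoundedUnder (· ≤ ·) atTop (fun n => gp b p (v n) + δ) :=
    isBoundedUnder_of ⟨dist p b + δ, fun n => by linarith [gp_le_dist b p (v n)]⟩
  calc seqGp b p w ≤ liminf (fun n => gp b p (v n) + δ) atTop :=
        liminf_le_liminf hclose (isBoundedUnder_ge_gp b p w) hbdd.isCoboundedUnder_ge
    _ = seqGp b p v + δ :=
        liminf_add_const atTop _ δ (isBoundedUnder_le_gp b p v).isCoboundedUnder_ge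
          (isBoundedUnder_ge_gp b p v)

lemma IsGromovHyperbolic.gpB_mem_Icc (hX : IsGromovHyperbolic δ X)
    (hv : IsGromovSeq o v) (huv : SeqEquiv o u v) (b p : X) :
    gpB o b p u ∈ Set.Icc (seqGp b p v - δ) (seqGp b p v) := by
  have hlower : ∀ L ∈ {L : ℝ | ∃ w : ℕ → X, IsGromovSeq o w ∧ SeqEquiv o u w ∧
      L = seqGp b p w}, seqGp b p v - δ ≤ L := by
    rintro L ⟨w, -, huw, rfl⟩
    linarith [hX.seqGp_le_seqGp_add huw huv b p]
  exact ⟨le_csInf ⟨_, v, hv, huv, rfl⟩ hlower, csInf_le ⟨_, hlower⟩ ⟨v, hv, huv, rfl⟩⟩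

/-- A term far above the liminf would contradict hyperbolicity against a later term close
to it. -/
lemma IsGromovHyperbolic.eventually_gp_mem_Icc (hX : IsGromovHyperbolic δ X)
    (hu : IsGromovSeq o u) (b p : X) {ε : ℝ} (hε : 0 < ε) :
    ∀ᶠ n in atTop, gp b p (u n) ∈ Set.Icc (seqGp b p u - ε) (seqGp b p u + δ + ε) := by
  set L := seqGp b p u
  have hlower : ∀ᶠ n in atTop, L - ε ≤ gp b p (u n) :=
    (eventually_lt_of_lt_liminf (by linarith : L - ε < L) (isBoundedUnder_ge_gp b p u)).mono
      fun n hn => hn.le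
  obtain ⟨N, hN⟩ := eventually_atTop.mp <| tendsto_atTop.mp
    (tendsto_gp_atTop_change_base o b hu) (L + ε + δ)
  obtain ⟨m, hm, hmN⟩ := ((frequently_lt_of_liminf_lt
    (isBoundedUnder_le_gp b p u).isCoboundedUnder_ge (by linarith : L < L + ε)).and_eventually
    (eventually_ge_atTop (max N.1 N.2))).exists
  have hupper : ∀ᶠ n in atTop, gp b p (u n) ≤ L + δ + ε := by
    filter_upwards [eventually_ge_atTop (max N.1 N.2)] with n hn
    have hfar : L + ε + δ ≤ gp b (u n) (u m) :=
      hN (n, m) ⟨(le_max_left _ _).trans hn, (le_max_right _ _).trans hmN⟩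
    have hmin : min (gp b p (u n)) (gp b (u n) (u m)) < L + ε + δ := by
      linarith [hX p (u n) (u m) b]
    linarith [(min_lt_iff.mp hmin).resolve_right hfar.not_gt]
  filter_upwards [hlower, hupper] with n hlo hup
  exact ⟨hlo, by linarith⟩

lemma IsGromovHyperbolic.abs_seqGp_change_base_le (hX : IsGromovHyperbolic δ X)
    (hu : IsGromovSeq o u) (z y₁ y₂ : X) :
    |(gp z y₁ y₂ - seqGp z y₁ u - seqGp z y₂ u) - (gp o y₁ y₂ - seqGp o y₁ u - seqGp o y₂ u)
      + (seqGp z o u - seqGp o z u)| ≤ 3 * δ := by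
  refine le_of_forall_pos_le_add fun ε hε => ?_
  have hε6 : 0 < ε / 6 := by positivity
  obtain ⟨n, ⟨hz₁, hz₂⟩, ⟨hz₃, hz₄⟩, ⟨ho₁, ho₂⟩, ⟨ho₃, ho₄⟩, ⟨hzo₁, hzo₂⟩, ⟨hoz₁, hoz₂⟩⟩ :=
    ((hX.eventually_gp_mem_Icc hu z y₁ hε6).and <| (hX.eventually_gp_mem_Icc hu z y₂ hε6).and <|
      (hX.eventually_gp_mem_Icc hu o y₁ hε6).and <| (hX.eventually_gp_mem_Icc hu o y₂ hε6).and <|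
      (hX.eventually_gp_mem_Icc hu z o hε6).and (hX.eventually_gp_mem_Icc hu o z hε6)).exists
  have := gp_sub_gp_sub_gp_change_base o z y₁ y₂ (u n)
  rw [abs_le]
  constructor <;> linarith

lemma IsGromovHyperbolic.abs_horoGp_isometryEquiv_sub_le (hX : IsGromovHyperbolic δ X)
    (hu : IsGromovSeq o u) (g : X ≃ᵢ X) (hg : SeqEquiv o (fun n => g (u n)) u) (y₁ y₂ : X) :
    |horoGp o u (g y₁) (g y₂) - (horoGp o u y₁ y₂ + busemann o u o (g.symm o))| ≤ 6 * δ := by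
  set z := g.symm o
  have huu := hu.seqEquiv_self
  have hgu := hu.map_isometryEquiv g
  have hseq (y : X) : seqGp o (g y) (fun n => g (u n)) = seqGp z y u := by
    simp only [seqGp, gp_isometryEquiv_apply, z]
  have hg₁ := hX.gpB_mem_Icc hgu hg.symm o (g y₁)
  have hg₂ := hX.gpB_mem_Icc hgu hg.symm o (g y₂)
  rw [hseq] at hg₁ hg₂
  have h₁ := hX.gpB_mem_Icc hu huu o y₁
  have h₂ := hX.gpB_mem_Icc hu huu o y₂
  have hoz := hX.gpB_mem_Icc hu huu o z
  have hzo := hX.gpB_mem_Icc hu huu z o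
  have hbase := hX.abs_seqGp_change_base_le hu z y₁ y₂
  simp only [Set.mem_Icc] at *
  rw [abs_le] at hbase ⊢
  simp only [horoGp, busemann, gp_isometryEquiv_apply]
  constructor <;> linarith

end Hyperbolic

theorem metametric_conformal_at_fixed_point_general {X : Type*} [MetricSpace X] (o : X)
    (b : ℝ) (hb : 1 < b) (δ₀ : ℝ)
    (hhyp : ∀ x y z w : X, min (gp w x y) (gp w y z) - δ₀ ≤ gp w x z)
    (u : ℕ → X) (hu : IsGromovSeq o u)
    (D : X → X → ℝ) (K : ℝ) (hK : 1 ≤ K)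
    (hD : ∀ y₁ y₂ : X,
      K⁻¹ * b ^ (-(gp o y₁ y₂ - gpB o o y₁ u - gpB o o y₂ u)) ≤ D y₁ y₂ ∧
      D y₁ y₂ ≤ K * b ^ (-(gp o y₁ y₂ - gpB o o y₁ u - gpB o o y₂ u))) :
    ∃ C : ℝ, 0 < C ∧ ∀ g : X ≃ᵢ X, SeqEquiv o (fun n => g (u n)) u →
      ∀ y₁ y₂ : X,
        C⁻¹ * (derivAt o b u g)⁻¹ * D y₁ y₂ ≤ D (g y₁) (g y₂) ∧
        D (g y₁) (g y₂) ≤ C * (derivAt o b u g)⁻¹ * D y₁ y₂ := by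
  have hX : IsGromovHyperbolic δ₀ X := hhyp
  have hK₀ : 0 < K := zero_lt_one.trans_le hK
  refine ⟨K ^ 2 * b ^ (6 * δ₀), by positivity, fun g hg y₁ y₂ => ?_⟩
  exact rpow_comparable_of_abs_exponent_sub_le hb hK₀ (hD y₁ y₂) (hD (g y₁) (g y₂))
    (hX.abs_horoGp_isometryEquiv_sub_le hu g hg y₁ y₂)

/-- Let `ξ ∈ ∂X` (represented by the Gromov sequence `u`) and let `D = D_{ξ,o}` be a
metametric satisfying `D(y₁,y₂) ≍ b^{-[⟨y₁|y₂⟩_o - ⟨y₁|ξ⟩_o - ⟨y₂|ξ⟩_o]}` (with constant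
`K`).  Then there is `C > 0`, independent of `g, y₁, y₂`, such that for every isometry `g`
fixing `ξ` and all points `y₁, y₂`:
`D(g(y₁), g(y₂)) ≍ g'(ξ)⁻¹ · D(y₁,y₂)` up to the multiplicative constant `C`. -/
theorem metametric_conformal_at_fixed_point {X : Type*} [MetricSpace X] (o : X)
    (b : ℝ) (hb : 1 < b) (δ₀ : ℝ) (hδ : 0 ≤ δ₀)
    (hhyp : ∀ x y z w : X, min (gp w x y) (gp w y z) - δ₀ ≤ gp w x z)
    (u : ℕ → X) (hu : IsGromovSeq o u)
    (D : X → X → ℝ) (K : ℝ) (hK : 1 ≤ K)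
    (hD : ∀ y₁ y₂ : X,
      K⁻¹ * b ^ (-(gp o y₁ y₂ - gpB o o y₁ u - gpB o o y₂ u)) ≤ D y₁ y₂ ∧
      D y₁ y₂ ≤ K * b ^ (-(gp o y₁ y₂ - gpB o o y₁ u - gpB o o y₂ u))) :
    ∃ C : ℝ, 0 < C ∧ ∀ g : X ≃ᵢ X, SeqEquiv o (fun n => g (u n)) u →
      ∀ y₁ y₂ : X,
        C⁻¹ * (derivAt o b u g)⁻¹ * D y₁ y₂ ≤ D (g y₁) (g y₂) ∧
        D (g y₁) (g y₂) ≤ C * (derivAt o b u g)⁻¹ * D y₁ y₂ :=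
  metametric_conformal_at_fixed_point_general o b hb δ₀ hhyp u hu D K hK hD
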